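/- arXiv:2205.15719 — 3 statements merged into one kernel-verified Lean document; each statement's English description precedes it below -/
import Mathlib

section
/- Let N ≥ 3 and let p, q > 1 satisfy 1/(p+1) + 1/(q+1) = (N-2)/N. Let K₁, K₂ be bounded continuous functions on ℝ^N, let (v₁, v₂) be a pair of C² functions solving -Δv₁ = K₁ v₂^p and -Δv₂ = K₂ v₁^q on ℝ^N with v₁, v₂ > 0, and let (ξ₁, ξ₂) be a pair of C² functions solving -Δξ₁ = p K₁ v₂^{p-1} ξ₂ and -Δξ₂ = q K₂ v₁^{q-1} ξ₁ on ℝ^N. Assume the decay bounds |v_i(y)| + |ξ_i(y)| ≤ C(1+|y|)^{-(N-2)} and |∇v_i(y)| + |∇ξ_i(y)| ≤ C(1+|y|)^{-(N-1)} for i = 1,2. Then all the integrals below converge absolutely and (N-2) ∫_{ℝ^N} (∇v₁·∇ξ₂ + ∇v₂·∇ξ₁) = N ∫_{ℝ^N} (K₁ v₂^p ξ₂ + K₂ v₁^q ξ₁). -/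
open MeasureTheory Real Filter
open scoped RealInnerProductSpace ENNReal

noncomputable section

abbrev Euc (N : ℕ) := EuclideanSpace ℝ (Fin N)

/-- The Laplacian, as the sum of the second partial derivatives. -/
def lapl {N : ℕ} (u : Euc N → ℝ) (y : Euc N) : ℝ :=
  ∑ i : Fin N,
    fderiv ℝ (fun z => fderiv ℝ u z (EuclideanSpace.single i 1)) y (EuclideanSpace.single i 1)

/-- A ground state of the limit Lane-Emden system. -/
structure GroundState (N : ℕ) (p q : ℝ) where
  U : Euc N → ℝ
  V : Euc N → ℝ
  U_pos : ∀ y, 0 < U y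
  V_pos : ∀ y, 0 < V y
  U_c2 : ContDiff ℝ 2 U
  V_c2 : ContDiff ℝ 2 V
  U_radial : ∀ y z : Euc N, ‖y‖ = ‖z‖ → U y = U z
  V_radial : ∀ y z : Euc N, ‖y‖ = ‖z‖ → V y = V z
  U_decr : ∀ y z : Euc N, ‖y‖ ≤ ‖z‖ → U z ≤ U y
  V_decr : ∀ y z : Euc N, ‖y‖ ≤ ‖z‖ → V z ≤ V y
  U_mem : MemLp U (ENNReal.ofReal (q + 1)) volume
  V_mem : MemLp V (ENNReal.ofReal (p + 1)) volume
  U_vanish : Tendsto U (cocompact (Euc N)) (nhds 0)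
  V_vanish : Tendsto V (cocompact (Euc N)) (nhds 0)
  U_eq : ∀ y, - lapl U y = (V y) ^ p
  V_eq : ∀ y, - lapl V y = (U y) ^ q
  U_norm : U 0 = 1

def bubU {N : ℕ} {p q : ℝ} (g : GroundState N p q) (ξ : Euc N) (l : ℝ) (y : Euc N) : ℝ :=
  l ^ ((N : ℝ) / (q + 1)) * g.U (l • (y - ξ))

def bubV {N : ℕ} {p q : ℝ} (g : GroundState N p q) (ξ : Euc N) (l : ℝ) (y : Euc N) : ℝ :=
  l ^ ((N : ℝ) / (p + 1)) * g.V (l • (y - ξ))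

/-- Vertices of the regular `k`-gon of radius `r` in the `(y₁,y₂)`-plane. -/
def vtx (N k : ℕ) (r : ℝ) (j : ℕ) : Euc N :=
  (WithLp.equiv 2 (Fin N → ℝ)).symm fun i =>
    if (i : ℕ) = 0 then r * Real.cos (2 * π * j / k)
    else if (i : ℕ) = 1 then r * Real.sin (2 * π * j / k) else 0

def muk (N : ℕ) (m : ℝ) (k : ℕ) : ℝ := (k : ℝ) ^ (((N : ℝ) - 2) / ((N : ℝ) - 2 - m))

def W1 {N : ℕ} {p q : ℝ} (g : GroundState N p q) (k : ℕ) (r l : ℝ) (y : Euc N) : ℝ :=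
  ∑ j ∈ Finset.range k, bubU g (vtx N k r j) l y

def W2 {N : ℕ} {p q : ℝ} (g : GroundState N p q) (k : ℕ) (r l : ℝ) (y : Euc N) : ℝ :=
  ∑ j ∈ Finset.range k, bubV g (vtx N k r j) l y

def reflCoord {N : ℕ} (i : Fin N) (y : Euc N) : Euc N := y - EuclideanSpace.single i (2 * y i)

def rot2 {N : ℕ} (α : ℝ) (y : Euc N) : Euc N :=
  (WithLp.equiv 2 (Fin N → ℝ)).symm fun i =>
    if (i : ℕ) = 0 then Real.cos α * y i - Real.sin α * y ⟨1 % N, Nat.mod_lt 1 i.pos⟩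
    else if (i : ℕ) = 1 then Real.sin α * y ⟨0, i.pos⟩ + Real.cos α * y i
    else y i

/-- The symmetry class `H_s`: even in `y₂,…,y_N` and invariant under rotation by `2π/k` in
the `(y₁,y₂)`-plane. -/
def SymmPair {N : ℕ} (k : ℕ) (u₁ u₂ : Euc N → ℝ) : Prop :=
  (∀ i : Fin N, 1 ≤ (i : ℕ) → ∀ y, u₁ (reflCoord i y) = u₁ y ∧ u₂ (reflCoord i y) = u₂ y) ∧
  (∀ y, u₁ (rot2 (2 * π / k) y) = u₁ y ∧ u₂ (rot2 (2 * π / k) y) = u₂ y)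

/-- Weighted sup-norm, valued in `ℝ≥0∞`. -/
def wSup {N : ℕ} (w : Euc N → ℝ) (u : Euc N → ℝ) : ℝ≥0∞ :=
  ⨆ y, ENNReal.ofReal (|u y| / w y)

def wt {N : ℕ} (k : ℕ) (r σ : ℝ) (y : Euc N) : ℝ :=
  ∑ j ∈ Finset.range k, (1 + ‖y - vtx N k r j‖) ^ (-σ)

def sigb (N : ℕ) (η : ℝ) : ℝ := ((N : ℝ) - 2) / 2 + (1 + η)

def Yd {N : ℕ} {p q : ℝ} (g : GroundState N p q) (k : ℕ) (r l : ℝ) (j t : ℕ) (y : Euc N) : ℝ :=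
  if t = 0 then deriv (fun s => bubU g (vtx N k s j) l y) r
  else deriv (fun s => bubU g (vtx N k r j) s y) l

def Zd {N : ℕ} {p q : ℝ} (g : GroundState N p q) (k : ℕ) (r l : ℝ) (j t : ℕ) (y : Euc N) : ℝ :=
  if t = 0 then deriv (fun s => bubV g (vtx N k s j) l y) r
  else deriv (fun s => bubV g (vtx N k r j) s y) l

def Orth {N : ℕ} {p q : ℝ} (g : GroundState N p q) (k : ℕ) (r l : ℝ)
    (φ₁ φ₂ : Euc N → ℝ) : Prop :=
  ∀ j ∈ Finset.range k, ∀ t ∈ Finset.range 2,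
    ∫ y : Euc N, (p * (bubV g (vtx N k r j) l y) ^ (p - 1) * Zd g k r l j t y * φ₁ y
      + q * (bubU g (vtx N k r j) l y) ^ (q - 1) * Yd g k r l j t y * φ₂ y) = 0

def LinProb {N : ℕ} {p q : ℝ} (g : GroundState N p q) (K₁ K₂ : ℝ → ℝ) (k : ℕ) (r l μ : ℝ)
    (h₁ h₂ φ₁ φ₂ : Euc N → ℝ) (c : ℕ → ℝ) : Prop :=
  (∀ y : Euc N, - lapl φ₁ y - p * K₁ (‖y‖ / μ) * (W2 g k r l y) ^ (p - 1) * φ₂ y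
      = h₁ y + ∑ t ∈ Finset.range 2, c t *
          (p * ∑ j ∈ Finset.range k, (bubV g (vtx N k r j) l y) ^ (p - 1) * Zd g k r l j t y)) ∧
  (∀ y : Euc N, - lapl φ₂ y - q * K₂ (‖y‖ / μ) * (W1 g k r l y) ^ (q - 1) * φ₁ y
      = h₂ y + ∑ t ∈ Finset.range 2, c t *
          (q * ∑ j ∈ Finset.range k, (bubU g (vtx N k r j) l y) ^ (q - 1) * Yd g k r l j t y)) ∧
  SymmPair k φ₁ φ₂ ∧ Orth g k r l φ₁ φ₂

def NonlinProb {N : ℕ} {p q : ℝ} (g : GroundState N p q) (K₁ K₂ : ℝ → ℝ) (k : ℕ) (r l μ : ℝ)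
    (φ₁ φ₂ : Euc N → ℝ) (c : ℕ → ℝ) : Prop :=
  (∀ y : Euc N, - lapl (fun z => W1 g k r l z + φ₁ z) y
      = K₁ (‖y‖ / μ) * (W2 g k r l y + φ₂ y) ^ p
        + ∑ t ∈ Finset.range 2, c t *
            (p * ∑ j ∈ Finset.range k, (bubV g (vtx N k r j) l y) ^ (p - 1) * Zd g k r l j t y)) ∧
  (∀ y : Euc N, - lapl (fun z => W2 g k r l z + φ₂ z) y
      = K₂ (‖y‖ / μ) * (W1 g k r l y + φ₁ y) ^ q
        + ∑ t ∈ Finset.range 2, c t *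
            (q * ∑ j ∈ Finset.range k, (bubU g (vtx N k r j) l y) ^ (q - 1) * Yd g k r l j t y))

/-- Condition (K). -/
structure CondK (N : ℕ) (p : ℝ) (K₁ K₂ : ℝ → ℝ) (r₀ m₁ m₂ : ℝ) : Prop where
  cont₁ : Continuous K₁
  cont₂ : Continuous K₂
  pos₁ : ∀ r, 0 < K₁ r
  pos₂ : ∀ r, 0 < K₂ r
  hr₀ : 0 < r₀
  hm₁ : 2 ≤ m₁
  hm₁' : m₁ < (N : ℝ) - 2
  hm₂ : 2 ≤ m₂
  hm₂' : m₂ < (N : ℝ) - 2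
  hm₁₂ : m₁ ≤ m₂
  hmm : m₁ < (2 * p - 1) * ((N : ℝ) - 2) - 8
  expand : ∃ δ c₁ c₂ θ₁ θ₂ C : ℝ, 0 < δ ∧ 0 < c₁ ∧ 0 < c₂ ∧ 0 < θ₁ ∧ 0 < θ₂ ∧
    (∀ r : ℝ, |r - r₀| < δ →
      |K₁ r - (1 - c₁ * |r - r₀| ^ m₁)| ≤ C * |r - r₀| ^ (m₁ + θ₁)) ∧
    (∀ r : ℝ, |r - r₀| < δ →
      |K₂ r - (1 - c₂ * |r - r₀| ^ m₂)| ≤ C * |r - r₀| ^ (m₂ + θ₂))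

/-- Condition (P), with `m = m₁`. -/
def CondP (N : ℕ) (p m : ℝ) : Prop :=
  (N = 5 → 13 / 6 < p ∧ p ≤ 7 / 3) ∧
  (6 ≤ N → max (((N : ℝ) + 1) / ((N : ℝ) - 2))
      (((N : ℝ) * ((N : ℝ) - 2)) / (((N : ℝ) - 2) ^ 2 - ((N : ℝ) - 2 - m))) < p ∧
    p ≤ ((N : ℝ) + 2) / ((N : ℝ) - 2))

/-- `(p,q)` lies on the critical hyperbola, with `p ≤ (N+2)/(N-2) ≤ q`. -/
def Hyperbola (N : ℕ) (p q : ℝ) : Prop :=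
  1 < p ∧ 1 < q ∧ 1 / (p + 1) + 1 / (q + 1) = ((N : ℝ) - 2) / (N : ℝ) ∧
  p ≤ ((N : ℝ) + 2) / ((N : ℝ) - 2) ∧ ((N : ℝ) + 2) / ((N : ℝ) - 2) ≤ q

def IsRadial {N : ℕ} (u : Euc N → ℝ) : Prop := ∀ y z : Euc N, ‖y‖ = ‖z‖ → u y = u z

/-- The energy functional. -/
def energy {N : ℕ} (p q : ℝ) (K₁ K₂ : ℝ → ℝ) (μ : ℝ) (u v : Euc N → ℝ) : ℝ :=
  (∫ y : Euc N, ⟪gradient u y, gradient v y⟫) -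
    (1 / (p + 1)) * ∫ y : Euc N, K₁ (‖y‖ / μ) * |v y| ^ (p + 1) -
    (1 / (q + 1)) * ∫ y : Euc N, K₂ (‖y‖ / μ) * |u y| ^ (q + 1)


def rwt (N k : ℕ) (μ rb e σ : ℝ) (y : Euc N) : ℝ :=
  ∑ j ∈ Finset.range k, μ ^ e * (1 + μ * ‖y - vtx N k rb j‖) ^ (-σ)

def radLap (N : ℕ) (K : ℝ → ℝ) (r : ℝ) : ℝ :=
  deriv (deriv K) r + ((N : ℝ) - 1) / r * deriv K r

def Nt1 {N : ℕ} {p q : ℝ} (g : GroundState N p q) (K₁ : ℝ → ℝ) (k : ℕ) (r l μ : ℝ)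
    (φ₂ : Euc N → ℝ) (y : Euc N) : ℝ :=
  K₁ (‖y‖ / μ) *
    ((W2 g k r l y + φ₂ y) ^ p - (W2 g k r l y) ^ p - p * (W2 g k r l y) ^ (p - 1) * φ₂ y)

def Nt2 {N : ℕ} {p q : ℝ} (g : GroundState N p q) (K₂ : ℝ → ℝ) (k : ℕ) (r l μ : ℝ)
    (φ₁ : Euc N → ℝ) (y : Euc N) : ℝ :=
  K₂ (‖y‖ / μ) *
    ((W1 g k r l y + φ₁ y) ^ q - (W1 g k r l y) ^ q - q * (W1 g k r l y) ^ (q - 1) * φ₁ y)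

def Rt1 {N : ℕ} {p q : ℝ} (g : GroundState N p q) (K₁ : ℝ → ℝ) (k : ℕ) (r l μ : ℝ)
    (y : Euc N) : ℝ :=
  K₁ (‖y‖ / μ) * (W2 g k r l y) ^ p - ∑ j ∈ Finset.range k, (bubV g (vtx N k r j) l y) ^ p

def Rt2 {N : ℕ} {p q : ℝ} (g : GroundState N p q) (K₂ : ℝ → ℝ) (k : ℕ) (r l μ : ℝ)
    (y : Euc N) : ℝ :=
  K₂ (‖y‖ / μ) * (W1 g k r l y) ^ q - ∑ j ∈ Finset.range k, (bubU g (vtx N k r j) l y) ^ q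

/-!
Both sides of the identity vanish. Green's first identity on `ℝ^N` holds under the assumed
decay: it follows from the divergence theorem on the cubes `[-R, R]^N`, because the flux
`u ∇w` decays like `|y|^(3-2N)` while the boundary has area `O(R^(N-1))`, and `N ≥ 3`.
Applied in both orders to the pairs `(v₁, ξ₂)` and `(v₂, ξ₁)`, with
`A = ∫ K₁ v₂^p ξ₂` and `B = ∫ K₂ v₁^q ξ₁`, it gives
`∫ ∇v₁·∇ξ₂ = A = q B` and `∫ ∇v₂·∇ξ₁ = B = p A`, so `A = pq A` with `pq > 1`, hence
`A = B = 0`. The critical hyperbola gives `(N-2)(p+1) > N` and `(N-2)(q+1) > N`, which is what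
makes `A` and `B` absolutely convergent.
-/

open InnerProductSpace Module Set Topology

section Decay

variable {E : Type*} [NormedAddCommGroup E] [NormedSpace ℝ E] [FiniteDimensional ℝ E]
  [MeasurableSpace E] [BorelSpace E] {μ : Measure E} [μ.IsAddHaarMeasure]

theorem integrable_of_abs_le_one_add_norm_rpow_neg {f : E → ℝ} (hf : Continuous f) {c r : ℝ}
    (hr : (finrank ℝ E : ℝ) < r) (hb : ∀ y, |f y| ≤ c * (1 + ‖y‖) ^ (-r)) : Integrable f μ :=
  ((integrable_one_add_norm hr).const_mul c).mono' hf.aestronglyMeasurable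
    (Eventually.of_forall hb)

theorem abs_mul_rpow_mul_le {k x z M C w e : ℝ} (hw : 0 < w) (he : 0 ≤ e) (hk : |k| ≤ M)
    (hx : |x| ≤ C * w) (hz : |z| ≤ C * w) : |k * x ^ e * z| ≤ M * C ^ e * C * w ^ (e + 1) := by
  have hC : 0 ≤ C := nonneg_of_mul_nonneg_left ((abs_nonneg x).trans hx) hw
  have hxe : |x ^ e| ≤ C ^ e * w ^ e :=
    calc |x ^ e| ≤ |x| ^ e := abs_rpow_le_abs_rpow x e
      _ ≤ (C * w) ^ e := rpow_le_rpow (abs_nonneg x) hx he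
      _ = C ^ e * w ^ e := mul_rpow hC hw.le
  calc |k * x ^ e * z| = |k| * |x ^ e| * |z| := by rw [abs_mul, abs_mul]
    _ ≤ M * (C ^ e * w ^ e) * (C * w) := by
        have hM : 0 ≤ M := (abs_nonneg k).trans hk
        exact mul_le_mul (mul_le_mul hk hxe (abs_nonneg _) hM) hz (abs_nonneg _)
          (mul_nonneg hM (by positivity))
    _ = M * C ^ e * C * w ^ (e + 1) := by rw [rpow_add_one hw.ne']; ring

theorem integrable_mul_rpow_mul_of_decay {K v z : E → ℝ} {M C a e : ℝ} (hK : Continuous K)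
    (hv : Continuous v) (hz : Continuous z) (he : 0 ≤ e) (hexp : (finrank ℝ E : ℝ) < a * (e + 1))
    (hKb : ∀ y, |K y| ≤ M) (hvb : ∀ y, |v y| ≤ C * (1 + ‖y‖) ^ (-a))
    (hzb : ∀ y, |z y| ≤ C * (1 + ‖y‖) ^ (-a)) :
    Integrable (fun y => K y * v y ^ e * z y) μ := by
  refine integrable_of_abs_le_one_add_norm_rpow_neg (c := M * C ^ e * C)
    ((hK.mul (hv.rpow_const fun _ => Or.inr he)).mul hz) hexp fun y => ?_
  have hρ : 0 < 1 + ‖y‖ := by positivity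
  calc |K y * v y ^ e * z y| ≤ M * C ^ e * C * ((1 + ‖y‖) ^ (-a)) ^ (e + 1) :=
        abs_mul_rpow_mul_le (rpow_pos_of_pos hρ _) he (hKb y) (hvb y) (hzb y)
    _ = M * C ^ e * C * (1 + ‖y‖) ^ (-(a * (e + 1))) := by rw [← rpow_mul hρ.le, neg_mul]

end Decay

theorem lt_sub_two_mul_of_one_div_add_one_div_eq {N a b : ℝ} (hN : 0 < N) (ha : 0 < a)
    (hb : 0 < b) (h : 1 / a + 1 / b = (N - 2) / N) : N < (N - 2) * a := by
  have : 1 / a < (N - 2) / N := by linarith [one_div_pos.2 hb]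
  rw [div_lt_div_iff₀ ha hN] at this
  linarith

section Euclidean

variable {N : ℕ}

theorem gradient_apply_eq_fderiv_single (u : Euc N → ℝ) (y : Euc N) (i : Fin N) :
    gradient u y i = fderiv ℝ u y (EuclideanSpace.single i 1) := by
  rw [← toDual_gradient (𝕜 := ℝ), toDual_apply_apply, EuclideanSpace.inner_single_right]
  simp

theorem inner_gradient_eq_sum (u w : Euc N → ℝ) (y : Euc N) :
    ⟪gradient u y, gradient w y⟫ = ∑ i, fderiv ℝ u y (EuclideanSpace.single i 1) *
      fderiv ℝ w y (EuclideanSpace.single i 1) := by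
  simp only [PiLp.inner_apply, gradient_apply_eq_fderiv_single, RCLike.inner_apply, conj_trivial]
  exact Finset.sum_congr rfl fun i _ => mul_comm _ _

theorem continuous_gradient_of_contDiff {u : Euc N → ℝ} (hu : ContDiff ℝ 1 u) :
    Continuous (gradient u) :=
  (toDual ℝ (Euc N)).symm.continuous.comp (hu.continuous_fderiv one_ne_zero)

theorem inner_gradient_add_mul_lapl_eq_sum (u w : Euc N → ℝ) (y : Euc N) :
    ⟪gradient u y, gradient w y⟫ + u y * lapl w y =
      ∑ i, (u y • fderiv ℝ (fun z => fderiv ℝ w z (EuclideanSpace.single i 1)) y +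
        fderiv ℝ w y (EuclideanSpace.single i 1) • fderiv ℝ u y) (EuclideanSpace.single i 1) := by
  simp only [add_apply, smul_apply, smul_eq_mul, Finset.sum_add_distrib, ← Finset.mul_sum,
    inner_gradient_eq_sum, lapl]
  rw [add_comm]
  congr 1
  exact Finset.sum_congr rfl fun i _ => mul_comm _ _

end Euclidean

theorem tendsto_two_mul_pow_mul_one_add_rpow_neg {n : ℕ} {s : ℝ} (hs : n < s) :
    Tendsto (fun R : ℝ => (2 * R) ^ n * (1 + R) ^ (-s)) atTop (𝓝 0) := by
  have hlim : Tendsto (fun R : ℝ => 2 ^ n * (1 + R) ^ (-(s - n))) atTop (𝓝 0) := by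
    simpa using ((tendsto_rpow_neg_atTop (sub_pos.2 hs)).comp
      (tendsto_atTop_add_const_left _ 1 tendsto_id)).const_mul (2 ^ n)
  refine squeeze_zero' ((eventually_ge_atTop 0).mono fun R hR => by positivity)
    ((eventually_ge_atTop 0).mono fun R hR => ?_) hlim
  calc (2 * R) ^ n * (1 + R) ^ (-s) ≤ (2 * (1 + R)) ^ n * (1 + R) ^ (-s) := by gcongr; linarith
    _ = 2 ^ n * (1 + R) ^ (-(s - n)) := by
      rw [mul_pow, ← rpow_natCast (1 + R), mul_assoc, ← rpow_add (by linarith)]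
      ring_nf

def cube (N : ℕ) (R : ℝ) : Set (Euc N) := {y | ∀ i, |y i| ≤ R}

theorem aecover_cube {N : ℕ} : AECover (volume : Measure (Euc N)) atTop (cube N) :=
  (aecover_closedBall (x := 0) tendsto_id).superset
    (fun R y hy i => (PiLp.norm_apply_le y i).trans (by simpa using hy))
    (fun R => by
      simp only [cube, ofPred_forall]
      exact MeasurableSet.iInter fun i => measurableSet_le (by fun_prop) measurable_const)

section Divergence

variable {n : ℕ}

theorem abs_setIntegral_face_le {g : Euc (n + 1) → ℝ} {c s R t : ℝ}
    (hs : 0 ≤ s) (hdecay : ∀ y, |g y| ≤ c * (1 + ‖y‖) ^ (-s)) (i : Fin (n + 1)) (ht : |t| = R) :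
    |∫ x in Icc (fun _ => -R) (fun _ => R),
        g ((EuclideanSpace.equiv (Fin (n + 1)) ℝ).symm (i.insertNth t x))|
      ≤ c * (1 + R) ^ (-s) * (2 * R) ^ n := by
  have hR : 0 ≤ R := ht ▸ abs_nonneg t
  have hbound : ∀ x ∈ Icc (fun _ => -R) (fun _ => R),
      ‖g ((EuclideanSpace.equiv (Fin (n + 1)) ℝ).symm (i.insertNth t x))‖
        ≤ c * (1 + R) ^ (-s) := by
    intro x _
    set y := (EuclideanSpace.equiv (Fin (n + 1)) ℝ).symm (i.insertNth t x)
    have hRy : R ≤ ‖y‖ := by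
      simpa [y, ht] using PiLp.norm_apply_le y i
    have hc : 0 ≤ c := nonneg_of_mul_nonneg_left ((abs_nonneg _).trans (hdecay 0)) (by simp)
    exact (hdecay y).trans (mul_le_mul_of_nonneg_left
      (rpow_le_rpow_of_nonpos (by positivity) (by linarith) (by linarith)) hc)
  have hvol : volume.real (Icc (fun _ => -R) (fun _ : Fin n => R)) = (2 * R) ^ n := by
    rw [measureReal_def, Real.volume_Icc_pi_toReal fun _ => by linarith]
    simp [two_mul]
  simpa [hvol] using norm_setIntegral_le_of_norm_le_const (μ := volume) measure_Icc_lt_top hbound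

theorem abs_setIntegral_cube_divergence_le {f : Fin (n + 1) → Euc (n + 1) → ℝ}
    {f' : Fin (n + 1) → Euc (n + 1) → Euc (n + 1) →L[ℝ] ℝ} {c s R : ℝ}
    (hf : ∀ i y, HasFDerivAt (f i) (f' i y) y) (hs : 0 ≤ s)
    (hdecay : ∀ i y, |f i y| ≤ c * (1 + ‖y‖) ^ (-s)) (hR : 0 ≤ R)
    (hint : IntegrableOn (fun y => ∑ i, f' i y (EuclideanSpace.single i 1)) (cube (n + 1) R)) :
    |∫ y in cube (n + 1) R, ∑ i, f' i y (EuclideanSpace.single i 1)|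
      ≤ 2 * (n + 1) * (c * (1 + R) ^ (-s) * (2 * R) ^ n) := by
  -- the divergence theorem is stated for order intervals; order `Euc` coordinatewise
  let _ : PartialOrder (Euc (n + 1)) := PartialOrder.lift WithLp.ofLp (WithLp.ofLp_injective 2)
  set eL := EuclideanSpace.equiv (Fin (n + 1)) ℝ
  have hcube : cube (n + 1) R = Icc (eL.symm fun _ => -R) (eL.symm fun _ => R) := by
    ext y
    simp only [cube, mem_ofPred_eq, abs_le, mem_Icc, forall_and]
    rfl
  rw [hcube] at hint ⊢
  rw [integral_divergence_of_hasFDerivAt_off_countable_of_equiv eL (fun _ _ => Iff.rfl)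
    (EuclideanSpace.volume_preserving_symm_measurableEquiv_toLp _) f f' ∅ countable_empty _ _
    (fun _ => show -R ≤ R by linarith) (fun i y _ => (hf i y).continuousAt.continuousWithinAt)
    (fun x _ i => hf i x) (fun y => ∑ i, f' i y (EuclideanSpace.single i 1))
    (fun _ => rfl) hint]
  have hface : ∀ i t, |t| = R → |∫ x in Icc (fun _ => -R) (fun _ => R),
      f i (eL.symm (i.insertNth t x))| ≤ c * (1 + R) ^ (-s) * (2 * R) ^ n :=
    fun i t ht => abs_setIntegral_face_le hs (hdecay i) i ht
  simp only [ContinuousLinearEquiv.apply_symm_apply, Function.comp_def]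
  calc _ ≤ ∑ i : Fin (n + 1), 2 * (c * (1 + R) ^ (-s) * (2 * R) ^ n) := by
        refine (Finset.abs_sum_le_sum_abs _ _).trans (Finset.sum_le_sum fun i _ => ?_)
        have hb := hface i R (abs_of_nonneg hR)
        have ha := hface i (-R) (by rw [abs_neg, abs_of_nonneg hR])
        exact (abs_sub _ _).trans (by linarith)
    _ = 2 * (n + 1) * (c * (1 + R) ^ (-s) * (2 * R) ^ n) := by
        rw [Finset.sum_const, Finset.card_univ, Fintype.card_fin, nsmul_eq_mul]
        push_cast
        ring

theorem integral_divergence_eq_zero_of_decay {f : Fin (n + 1) → Euc (n + 1) → ℝ}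
    {f' : Fin (n + 1) → Euc (n + 1) → Euc (n + 1) →L[ℝ] ℝ} {c s : ℝ}
    (hf : ∀ i y, HasFDerivAt (f i) (f' i y) y) (hs : n < s)
    (hdecay : ∀ i y, |f i y| ≤ c * (1 + ‖y‖) ^ (-s))
    (hint : Integrable (fun y => ∑ i, f' i y (EuclideanSpace.single i 1))) :
    ∫ y, ∑ i, f' i y (EuclideanSpace.single i 1) = 0 := by
  refine tendsto_nhds_unique (aecover_cube.integral_tendsto_of_countably_generated hint) ?_
  refine squeeze_zero_norm' ((eventually_ge_atTop 0).mono fun R hR => ?_)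
    (by simpa using (tendsto_two_mul_pow_mul_one_add_rpow_neg hs).const_mul (2 * (n + 1) * c))
  calc _ ≤ 2 * (n + 1) * (c * (1 + R) ^ (-s) * (2 * R) ^ n) :=
        abs_setIntegral_cube_divergence_le hf ((Nat.cast_nonneg n).trans hs.le) hdecay hR
          hint.integrableOn
    _ = _ := by ring

end Divergence

theorem integral_inner_gradient_add_mul_lapl_eq_zero {N : ℕ} (hN : 3 ≤ N) {u w : Euc N → ℝ}
    (hu : Differentiable ℝ u) (hw : ContDiff ℝ 2 w) {C : ℝ}
    (hub : ∀ y, |u y| ≤ C * (1 + ‖y‖) ^ (-((N : ℝ) - 2)))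
    (hwg : ∀ y, ‖gradient w y‖ ≤ C * (1 + ‖y‖) ^ (-((N : ℝ) - 1)))
    (hint : Integrable (fun y => ⟪gradient u y, gradient w y⟫ + u y * lapl w y)) :
    ∫ y, (⟪gradient u y, gradient w y⟫ + u y * lapl w y) = 0 := by
  obtain ⟨n, rfl⟩ : ∃ n, N = n + 1 := ⟨N - 1, by omega⟩
  push_cast at hub hwg
  set dw : Fin (n + 1) → Euc (n + 1) → ℝ := fun i z => fderiv ℝ w z (EuclideanSpace.single i 1)
  have hdw : ∀ i, Differentiable ℝ (dw i) := fun i =>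
    ((hw.fderiv_right (m := 1) (by norm_num)).clm_apply contDiff_const).differentiable one_ne_zero
  simp only [inner_gradient_add_mul_lapl_eq_sum] at hint ⊢
  have hC : 0 ≤ C := nonneg_of_mul_nonneg_left ((abs_nonneg _).trans (hub 0)) (by simp)
  refine integral_divergence_eq_zero_of_decay (f := fun i y => u y * dw i y) (c := C * C)
    (s := 2 * n - 1) (fun i y => (hu y).hasFDerivAt.mul (hdw i y).hasFDerivAt) ?_ (fun i y => ?_)
    hint
  · have : (2 : ℝ) ≤ n := by exact_mod_cast (by omega : 2 ≤ n)
    linarith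
  have hdwy : |dw i y| ≤ ‖gradient w y‖ := by
    simpa only [dw, ← gradient_apply_eq_fderiv_single, Real.norm_eq_abs]
      using PiLp.norm_apply_le (gradient w y) i
  have hρ : 0 < 1 + ‖y‖ := by positivity
  calc |u y * dw i y| = |u y| * |dw i y| := abs_mul _ _
    _ ≤ (C * (1 + ‖y‖) ^ (-((n : ℝ) + 1 - 2))) * (C * (1 + ‖y‖) ^ (-((n : ℝ) + 1 - 1))) :=
        mul_le_mul (hub y) (hdwy.trans (hwg y)) (abs_nonneg _) (by positivity)
    _ = C * C * (1 + ‖y‖) ^ (-(2 * (n : ℝ) - 1)) := by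
        rw [mul_mul_mul_comm, ← rpow_add hρ]
        ring_nf

def HasNewtonianDecay {N : ℕ} (C : ℝ) (u : Euc N → ℝ) : Prop :=
  ∀ y, |u y| ≤ C * (1 + ‖y‖) ^ (-((N : ℝ) - 2)) ∧
    ‖gradient u y‖ ≤ C * (1 + ‖y‖) ^ (-((N : ℝ) - 1))

namespace HasNewtonianDecay

variable {N : ℕ} {C : ℝ} {u w : Euc N → ℝ}

theorem of_add (h : ∀ y, |u y| + |w y| ≤ C * (1 + ‖y‖) ^ (-((N : ℝ) - 2)))
    (hg : ∀ y, ‖gradient u y‖ + ‖gradient w y‖ ≤ C * (1 + ‖y‖) ^ (-((N : ℝ) - 1))) :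
    HasNewtonianDecay C u ∧ HasNewtonianDecay C w :=
  ⟨fun y => ⟨le_of_add_le_of_nonneg_left (h y) (abs_nonneg _),
      le_of_add_le_of_nonneg_left (hg y) (norm_nonneg _)⟩,
    fun y => ⟨le_of_add_le_of_nonneg_right (h y) (abs_nonneg _),
      le_of_add_le_of_nonneg_right (hg y) (norm_nonneg _)⟩⟩

theorem integrable_inner_gradient (hN : 3 ≤ N) (hu : ContDiff ℝ 1 u) (hw : ContDiff ℝ 1 w)
    (hud : HasNewtonianDecay C u) (hwd : HasNewtonianDecay C w) :
    Integrable (fun y => ⟪gradient u y, gradient w y⟫) := by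
  have hN' : (3 : ℝ) ≤ N := by exact_mod_cast hN
  refine integrable_of_abs_le_one_add_norm_rpow_neg (c := C * C) (r := 2 * ((N : ℝ) - 1))
    ((continuous_gradient_of_contDiff hu).inner (continuous_gradient_of_contDiff hw))
    (by rw [finrank_euclideanSpace_fin]; linarith) fun y => ?_
  have hρ : 0 < 1 + ‖y‖ := by positivity
  have hC : 0 ≤ C := nonneg_of_mul_nonneg_left ((norm_nonneg _).trans (hud y).2) (by positivity)
  calc |⟪gradient u y, gradient w y⟫| ≤ ‖gradient u y‖ * ‖gradient w y‖ :=
        abs_real_inner_le_norm _ _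
    _ ≤ (C * (1 + ‖y‖) ^ (-((N : ℝ) - 1))) * (C * (1 + ‖y‖) ^ (-((N : ℝ) - 1))) :=
        mul_le_mul (hud y).2 (hwd y).2 (norm_nonneg _) (by positivity)
    _ = C * C * (1 + ‖y‖) ^ (-(2 * ((N : ℝ) - 1))) := by
        rw [mul_mul_mul_comm, ← rpow_add hρ]
        ring_nf

theorem integral_inner_gradient_eq_of_mul_lapl (hN : 3 ≤ N) (hu : ContDiff ℝ 2 u)
    (hw : ContDiff ℝ 2 w) (hud : HasNewtonianDecay C u) (hwd : HasNewtonianDecay C w)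
    {F : Euc N → ℝ} (hF : Integrable F) (hlap : ∀ y, u y * lapl w y = -F y) :
    ∫ y, ⟪gradient u y, gradient w y⟫ = ∫ y, F y := by
  have hI := hud.integrable_inner_gradient hN (hu.of_le one_le_two) (hw.of_le one_le_two) hwd
  have h0 := integral_inner_gradient_add_mul_lapl_eq_zero hN (hu.differentiable two_ne_zero) hw
    (fun y => (hud y).1) (fun y => (hwd y).2)
    (by simpa only [hlap, ← sub_eq_add_neg, Pi.sub_def] using hI.sub hF)
  simp only [hlap, ← sub_eq_add_neg] at h0
  rwa [integral_sub hI hF, sub_eq_zero] at h0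

theorem integral_inner_gradient_eq (hN : 3 ≤ N) (hu : ContDiff ℝ 2 u) (hw : ContDiff ℝ 2 w)
    (hud : HasNewtonianDecay C u) (hwd : HasNewtonianDecay C w) {F G : Euc N → ℝ}
    (hF : Integrable F) (hG : Integrable G) (hwF : ∀ y, u y * lapl w y = -F y)
    (huG : ∀ y, w y * lapl u y = -G y) :
    Integrable (fun y => ⟪gradient u y, gradient w y⟫) ∧
      ∫ y, ⟪gradient u y, gradient w y⟫ = ∫ y, F y ∧
      ∫ y, ⟪gradient u y, gradient w y⟫ = ∫ y, G y := by
  refine ⟨hud.integrable_inner_gradient hN (hu.of_le one_le_two) (hw.of_le one_le_two) hwd,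
    hud.integral_inner_gradient_eq_of_mul_lapl hN hu hw hwd hF hwF, ?_⟩
  simp_rw [real_inner_comm (gradient w _)]
  exact hwd.integral_inner_gradient_eq_of_mul_lapl hN hw hu hud hG huG

end HasNewtonianDecay

theorem rpow_eq_mul_rpow_sub_one {x : ℝ} (hx : x ≠ 0) (e : ℝ) : x ^ e = x * x ^ (e - 1) := by
  rw [rpow_sub_one hx, mul_div_cancel₀ _ hx]

theorem eq_zero_of_eq_mul_of_eq_mul {a b p q : ℝ} (hpq : p * q ≠ 1) (ha : a = q * b)
    (hb : b = p * a) : a = 0 ∧ b = 0 := by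
  have h : a * (1 - p * q) = 0 := by linear_combination ha + q * hb
  have ha0 : a = 0 := (mul_eq_zero.1 h).resolve_right (sub_ne_zero.2 hpq.symm)
  exact ⟨ha0, by rw [hb, ha0, mul_zero]⟩

theorem statement14 (N : ℕ) (hN : 3 ≤ N) (p q : ℝ) (hp : 1 < p) (hq : 1 < q)
    (hpq : 1 / (p + 1) + 1 / (q + 1) = ((N : ℝ) - 2) / (N : ℝ))
    (K₁ K₂ : Euc N → ℝ) (hK₁c : Continuous K₁) (hK₂c : Continuous K₂)
    (hKb : ∃ M : ℝ, ∀ y, |K₁ y| ≤ M ∧ |K₂ y| ≤ M)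
    (v₁ v₂ ξ₁ ξ₂ : Euc N → ℝ)
    (hv₁ : ContDiff ℝ 2 v₁) (hv₂ : ContDiff ℝ 2 v₂)
    (hξ₁ : ContDiff ℝ 2 ξ₁) (hξ₂ : ContDiff ℝ 2 ξ₂)
    (hv₁p : ∀ y, 0 < v₁ y) (hv₂p : ∀ y, 0 < v₂ y)
    (he₁ : ∀ y, - lapl v₁ y = K₁ y * (v₂ y) ^ p)
    (he₂ : ∀ y, - lapl v₂ y = K₂ y * (v₁ y) ^ q)
    (hl₁ : ∀ y, - lapl ξ₁ y = p * K₁ y * (v₂ y) ^ (p - 1) * ξ₂ y)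
    (hl₂ : ∀ y, - lapl ξ₂ y = q * K₂ y * (v₁ y) ^ (q - 1) * ξ₁ y)
    (C : ℝ)
    (hdec : ∀ y : Euc N,
      |v₁ y| + |ξ₁ y| ≤ C * (1 + ‖y‖) ^ (-((N : ℝ) - 2)) ∧
      |v₂ y| + |ξ₂ y| ≤ C * (1 + ‖y‖) ^ (-((N : ℝ) - 2)))
    (hgdec : ∀ y : Euc N,
      ‖gradient v₁ y‖ + ‖gradient ξ₁ y‖ ≤ C * (1 + ‖y‖) ^ (-((N : ℝ) - 1)) ∧
      ‖gradient v₂ y‖ + ‖gradient ξ₂ y‖ ≤ C * (1 + ‖y‖) ^ (-((N : ℝ) - 1))) :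
    Integrable (fun y : Euc N => ⟪gradient v₁ y, gradient ξ₂ y⟫) volume ∧
    Integrable (fun y : Euc N => ⟪gradient v₂ y, gradient ξ₁ y⟫) volume ∧
    Integrable (fun y : Euc N => K₁ y * (v₂ y) ^ p * ξ₂ y) volume ∧
    Integrable (fun y : Euc N => K₂ y * (v₁ y) ^ q * ξ₁ y) volume ∧
    ((N : ℝ) - 2) *
        ∫ y : Euc N, (⟪gradient v₁ y, gradient ξ₂ y⟫ + ⟪gradient v₂ y, gradient ξ₁ y⟫)
      = (N : ℝ) * ∫ y : Euc N, (K₁ y * (v₂ y) ^ p * ξ₂ y + K₂ y * (v₁ y) ^ q * ξ₁ y) := by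
  obtain ⟨M, hM⟩ := hKb
  obtain ⟨hv₁d, hξ₁d⟩ := HasNewtonianDecay.of_add (fun y => (hdec y).1) (fun y => (hgdec y).1)
  obtain ⟨hv₂d, hξ₂d⟩ := HasNewtonianDecay.of_add (fun y => (hdec y).2) (fun y => (hgdec y).2)
  have hN0 : (0 : ℝ) < N := Nat.cast_pos.2 (by omega)
  have hA : Integrable (fun y => K₁ y * v₂ y ^ p * ξ₂ y) :=
    integrable_mul_rpow_mul_of_decay hK₁c hv₂.continuous hξ₂.continuous (by linarith)
      (by rw [finrank_euclideanSpace_fin]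
          exact lt_sub_two_mul_of_one_div_add_one_div_eq hN0 (by linarith) (by linarith) hpq)
      (fun y => (hM y).1) (fun y => (hv₂d y).1)
      (fun y => (hξ₂d y).1)
  have hB : Integrable (fun y => K₂ y * v₁ y ^ q * ξ₁ y) :=
    integrable_mul_rpow_mul_of_decay hK₂c hv₁.continuous hξ₁.continuous (by linarith)
      (by rw [finrank_euclideanSpace_fin]
          exact lt_sub_two_mul_of_one_div_add_one_div_eq hN0 (by linarith) (b := p + 1)
            (by linarith) ((add_comm _ _).trans hpq))
      (fun y => (hM y).2) (fun y => (hv₁d y).1)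
      (fun y => (hξ₁d y).1)
  obtain ⟨hI₁, hE₁, hE₁'⟩ := hv₁d.integral_inner_gradient_eq hN hv₁ hξ₂ hξ₂d (hB.const_mul q) hA
    (fun y => by rw [rpow_eq_mul_rpow_sub_one (hv₁p y).ne' q]; linear_combination (-v₁ y) * hl₂ y)
    (fun y => by linear_combination (-ξ₂ y) * he₁ y)
  obtain ⟨hI₂, hE₂, hE₂'⟩ := hv₂d.integral_inner_gradient_eq hN hv₂ hξ₁ hξ₁d (hA.const_mul p) hB
    (fun y => by rw [rpow_eq_mul_rpow_sub_one (hv₂p y).ne' p]; linear_combination (-v₂ y) * hl₁ y)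
    (fun y => by linear_combination (-ξ₁ y) * he₂ y)
  rw [integral_const_mul] at hE₁ hE₂
  obtain ⟨hA0, hB0⟩ := eq_zero_of_eq_mul_of_eq_mul (one_lt_mul_of_lt_of_le hp hq.le).ne'
    (hE₁'.symm.trans hE₁) (hE₂'.symm.trans hE₂)
  refine ⟨hI₁, hI₂, hA, hB, ?_⟩
  rw [integral_add hI₁ hI₂, integral_add hA hB, hE₁', hE₂', hA0, hB0]
  ring

end
end

section
/- Let N ≥ 1 and let α, β > 0 and σ be constants with 0 < σ ≤ min{α, β}. Then there is a constant C > 0, depending only on α, β, σ, such that for all points x_i ≠ x_j in ℝ^N and all y ∈ ℝ^N: (1+|y-x_i|)^{-α} (1+|y-x_j|)^{-β} ≤ (C/|x_i - x_j|^σ) ((1+|y-x_i|)^{-(α+β-σ)} + (1+|y-x_j|)^{-(α+β-σ)}). -/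
open MeasureTheory Real Filter
open scoped RealInnerProductSpace ENNReal

noncomputable section

/- If `|y - xi| ≤ |y - xj|`, the triangle inequality gives `|xi - xj| ≤ 2 |y - xj|`,
so `σ` of the decay `β` at `xj` can be traded for the factor `(2 / |xi - xj|)^σ`, and the
remaining decay `β - σ` at `xj` is at least as strong as the same decay at `xi`. -/

lemma one_add_rpow_neg_mul_le_of_le {α β σ a b d : ℝ} (hσ : 0 ≤ σ) (hσβ : σ ≤ β)
    (ha : 0 ≤ a) (hab : a ≤ b) (hd : 0 < d) (hdb : d ≤ 2 * b) :
    (1 + a) ^ (-α) * (1 + b) ^ (-β) ≤ 2 ^ σ / d ^ σ * (1 + a) ^ (-(α + β - σ)) := by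
  have ha₁ : 0 < 1 + a := by linarith
  have hb₁ : 0 < 1 + b := by linarith
  have hsplit : (1 + b) ^ (-β) = (1 + b) ^ (-σ) * (1 + b) ^ (-(β - σ)) := by
    rw [← rpow_add hb₁]; ring_nf
  have hfar : (1 + b) ^ (-σ) ≤ (d / 2) ^ (-σ) :=
    rpow_le_rpow_of_nonpos (by positivity) (by linarith) (by linarith)
  have hnear : (1 + b) ^ (-(β - σ)) ≤ (1 + a) ^ (-(β - σ)) :=
    rpow_le_rpow_of_nonpos ha₁ (by linarith) (by linarith)
  have hscale : (d / 2) ^ (-σ) = 2 ^ σ / d ^ σ := by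
    rw [rpow_neg (by positivity), div_rpow hd.le zero_le_two, inv_div]
  calc (1 + a) ^ (-α) * (1 + b) ^ (-β)
      ≤ (1 + a) ^ (-α) * ((d / 2) ^ (-σ) * (1 + a) ^ (-(β - σ))) := by
        rw [hsplit]; gcongr
    _ = 2 ^ σ / d ^ σ * (1 + a) ^ (-(α + β - σ)) := by
        rw [hscale, show -(α + β - σ) = -α + -(β - σ) by ring, rpow_add ha₁]
        ring

lemma one_add_rpow_neg_mul_le_add {α β σ a b d : ℝ} (hσ : 0 ≤ σ) (hσα : σ ≤ α) (hσβ : σ ≤ β)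
    (ha : 0 ≤ a) (hb : 0 ≤ b) (hd : 0 < d) (hdab : d ≤ a + b) :
    (1 + a) ^ (-α) * (1 + b) ^ (-β) ≤
      2 ^ σ / d ^ σ * ((1 + a) ^ (-(α + β - σ)) + (1 + b) ^ (-(α + β - σ))) := by
  have hA : 0 ≤ 2 ^ σ / d ^ σ * (1 + a) ^ (-(α + β - σ)) := by positivity
  have hB : 0 ≤ 2 ^ σ / d ^ σ * (1 + b) ^ (-(α + β - σ)) := by positivity
  rw [mul_add]
  rcases le_total a b with hab | hba
  · have := one_add_rpow_neg_mul_le_of_le (α := α) hσ hσβ ha hab hd (by linarith)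
    linarith
  · have := one_add_rpow_neg_mul_le_of_le (α := β) hσ hσα hb hba hd (by linarith)
    rw [add_comm β α, mul_comm] at this
    linarith

lemma one_add_dist_rpow_neg_mul_le {X : Type*} [MetricSpace X] {α β σ : ℝ} (hσ : 0 ≤ σ)
    (hσα : σ ≤ α) (hσβ : σ ≤ β) {x x' : X} (hne : x ≠ x') (y : X) :
    (1 + dist y x) ^ (-α) * (1 + dist y x') ^ (-β) ≤
      2 ^ σ / dist x x' ^ σ *
        ((1 + dist y x) ^ (-(α + β - σ)) + (1 + dist y x') ^ (-(α + β - σ))) :=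
  one_add_rpow_neg_mul_le_add hσ hσα hσβ dist_nonneg dist_nonneg (dist_pos.mpr hne)
    (dist_triangle_left x x' y)

theorem statement17_general (α β σ : ℝ)
    (hσ : 0 < σ) (hσm : σ ≤ min α β) :
    ∃ C : ℝ, 0 < C ∧ ∀ (N : ℕ), 1 ≤ N → ∀ xi xj y : Euc N, xi ≠ xj →
      (1 + ‖y - xi‖) ^ (-α) * (1 + ‖y - xj‖) ^ (-β) ≤
        C / ‖xi - xj‖ ^ σ *
          ((1 + ‖y - xi‖) ^ (-(α + β - σ)) + (1 + ‖y - xj‖) ^ (-(α + β - σ))) := by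
  refine ⟨2 ^ σ, by positivity, fun N _ xi xj y hne => ?_⟩
  simpa only [dist_eq_norm] using
    one_add_dist_rpow_neg_mul_le hσ.le (le_min_iff.mp hσm).1 (le_min_iff.mp hσm).2 hne y

theorem statement17 (α β σ : ℝ) (hα : 0 < α) (hβ : 0 < β)
    (hσ : 0 < σ) (hσm : σ ≤ min α β) :
    ∃ C : ℝ, 0 < C ∧ ∀ (N : ℕ), 1 ≤ N → ∀ xi xj y : Euc N, xi ≠ xj →
      (1 + ‖y - xi‖) ^ (-α) * (1 + ‖y - xj‖) ^ (-β) ≤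
        C / ‖xi - xj‖ ^ σ *
          ((1 + ‖y - xi‖) ^ (-(α + β - σ)) + (1 + ‖y - xj‖) ^ (-(α + β - σ))) :=
  statement17_general α β σ hσ hσm

end
end

section
/- Let N ≥ 3 and let σ > 0 with σ ≠ N - 2. Then there exists a constant C > 0, depending only on N and σ, such that for every y ∈ ℝ^N: ∫_{ℝ^N} |y - z|^{-(N-2)} (1+|z|)^{-(2+σ)} dz ≤ C (1+|y|)^{-min{σ, N-2}}, the integral being finite for every y. -/
open MeasureTheory Real Filter
open scoped RealInnerProductSpace ENNReal

noncomputable section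

/-!
Write `a = 1 + ‖y‖`, `d = dim E`, and split the integral at the ball `B(y, a/2)`. On that ball
the weight `(1 + ‖z‖)^(-β)` is at most `(a/2)^(-β)`, and by translation and scaling the kernel
`‖z - y‖^(-α)` integrates over it to a multiple of `a^(d-α)`. Off the ball,
`‖y - z‖ ≥ max(a, ‖z‖)/4`, which reduces everything to `∫ max(a, ‖z‖)^(-α) (1 + ‖z‖)^(-β)`.
If `β > d` this is at most `a^(-α) ∫ (1 + ‖z‖)^(-β)`; if `β < d`, dropping the `1` and
substituting `z = a w` gives `a^(d-α-β)` times the finite integral of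
`max(1, ‖w‖)^(-α) ‖w‖^(-β)`. The theorem is the case `α = N - 2`, `β = 2 + σ`.
-/

open Metric Set Module

lemma preimage_sub_right_ball_zero {E : Type*} [SeminormedAddCommGroup E] (y : E) (r : ℝ) :
    (· - y) ⁻¹' ball (0 : E) r = ball y r := by
  ext z
  simp [dist_eq_norm]

lemma div_rpow_neg {t c : ℝ} (ht : 0 ≤ t) (hc : 0 ≤ c) (p : ℝ) :
    (t / c) ^ (-p) = c ^ p * t ^ (-p) := by
  rw [Real.div_rpow ht hc, Real.rpow_neg hc, div_inv_eq_mul, mul_comm]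

lemma norm_sub_rpow_mul_one_add_norm_rpow_le {E : Type*} [SeminormedAddCommGroup E] {α β : ℝ}
    (hα : 0 ≤ α) (hβ : 0 ≤ β) (y z : E) :
    ‖y - z‖ ^ (-α) * (1 + ‖z‖) ^ (-β) ≤
      ((1 + ‖y‖) / 2) ^ (-β) * (ball y ((1 + ‖y‖) / 2)).indicator (fun z => ‖z - y‖ ^ (-α)) z +
        4 ^ α * ((max (1 + ‖y‖) ‖z‖) ^ (-α) * (1 + ‖z‖) ^ (-β)) := by
  set a := 1 + ‖y‖
  have hy := norm_nonneg y
  have htri := norm_sub_norm_le y z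
  have htri' : ‖z‖ - ‖y‖ ≤ ‖y - z‖ := norm_sub_rev z y ▸ norm_sub_norm_le z y
  by_cases hz : z ∈ ball y (a / 2)
  · rw [mem_ball_iff_norm] at hz
    have hnear : a / 2 ≤ 1 + ‖z‖ := by rw [norm_sub_rev] at htri; linarith
    rw [indicator_of_mem (mem_ball_iff_norm.2 hz), norm_sub_rev z y, mul_comm (_ ^ (-β))]
    refine le_add_of_le_of_nonneg (mul_le_mul_of_nonneg_left ?_ (by positivity)) (by positivity)
    exact Real.rpow_le_rpow_of_nonpos (by positivity) hnear (by linarith)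
  · rw [mem_ball_iff_norm, not_lt, norm_sub_rev] at hz
    have hfar : max a ‖z‖ / 4 ≤ ‖y - z‖ := by
      rcases le_total ‖z‖ (2 * a) with h | h
      · have := max_le (show a ≤ 2 * a by linarith) h
        linarith
      · rw [max_eq_right (by linarith)]
        linarith
    rw [indicator_of_notMem (by rwa [mem_ball_iff_norm, not_lt, norm_sub_rev]), mul_zero, zero_add,
      ← mul_assoc, ← div_rpow_neg (by positivity) (by norm_num)]
    refine mul_le_mul_of_nonneg_right ?_ (by positivity)
    exact Real.rpow_le_rpow_of_nonpos (by positivity) hfar (by linarith)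

section

variable {E : Type*} [NormedAddCommGroup E] [NormedSpace ℝ E] [MeasurableSpace E] [BorelSpace E]
  [FiniteDimensional ℝ E] (μ : Measure E) [μ.IsAddHaarMeasure]

lemma integrableOn_ball_norm_rpow_neg [Nontrivial E] {s : ℝ} (hs : s < finrank ℝ E) (r : ℝ) :
    IntegrableOn (fun x : E => ‖x‖ ^ (-s)) (ball 0 r) μ := by
  refine (integrableOn_fun_norm_addHaar μ (f := fun t : ℝ => t ^ (-s))).2 ?_
  have hint : IntegrableOn (fun t : ℝ => t ^ ((finrank ℝ E : ℝ) - 1 - s)) (Ioo 0 r) :=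
    (intervalIntegrable_iff.1 (intervalIntegral.intervalIntegrable_rpow' (by linarith))).mono_set
      (Ioo_subset_Ioc_self.trans Ioc_subset_uIoc)
  refine hint.congr_fun (fun t ht => ?_) measurableSet_Ioo
  rw [smul_eq_mul, ← Real.rpow_natCast, Nat.cast_sub finrank_pos, ← Real.rpow_add ht.1]
  ring_nf

lemma setIntegral_ball_norm_rpow_neg (s : ℝ) {r : ℝ} (hr : 0 < r) :
    ∫ x in ball (0 : E) r, ‖x‖ ^ (-s) ∂μ =
      r ^ ((finrank ℝ E : ℝ) - s) * ∫ x in ball (0 : E) 1, ‖x‖ ^ (-s) ∂μ := by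
  have h := Measure.setIntegral_comp_smul_of_pos μ (fun x : E => ‖x‖ ^ (-s)) (ball 0 1) hr
  simp only [norm_smul, Real.norm_of_nonneg hr.le, Real.mul_rpow hr.le (norm_nonneg _),
    integral_const_mul, smul_unitBall_of_pos hr, smul_eq_mul] at h
  rw [sub_eq_add_neg, Real.rpow_add hr, Real.rpow_natCast, mul_assoc, h, ← mul_assoc,
    mul_inv_cancel₀ (pow_ne_zero _ hr.ne'), one_mul]

lemma integrableOn_ball_norm_sub_rpow_neg [Nontrivial E] {s : ℝ} (hs : s < finrank ℝ E)
    (y : E) (r : ℝ) : IntegrableOn (fun z : E => ‖z - y‖ ^ (-s)) (ball y r) μ := by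
  rw [← preimage_sub_right_ball_zero]
  exact ((measurePreserving_sub_right μ y).integrableOn_comp_preimage
    (measurableEmbedding_subRight y)).2 (integrableOn_ball_norm_rpow_neg μ hs r)

lemma setIntegral_ball_norm_sub_rpow_neg (s : ℝ) (y : E) {r : ℝ} (hr : 0 < r) :
    ∫ z in ball y r, ‖z - y‖ ^ (-s) ∂μ =
      r ^ ((finrank ℝ E : ℝ) - s) * ∫ x in ball (0 : E) 1, ‖x‖ ^ (-s) ∂μ := by
  rw [← preimage_sub_right_ball_zero, (measurePreserving_sub_right μ y).setIntegral_preimage_emb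
    (measurableEmbedding_subRight y) (fun x => ‖x‖ ^ (-s)), setIntegral_ball_norm_rpow_neg μ s hr]

lemma integrable_max_one_norm_rpow_mul_norm_rpow [Nontrivial E] {α β : ℝ}
    (hβ : β < finrank ℝ E) (hαβ : finrank ℝ E < α + β) :
    Integrable (fun x : E => (max 1 ‖x‖) ^ (-α) * ‖x‖ ^ (-β)) μ := by
  have hnear := (integrable_indicator_iff measurableSet_ball).2
    (integrableOn_ball_norm_rpow_neg μ hβ 1)
  have hfar := (integrable_one_add_norm (μ := μ) hαβ).const_mul ((2 : ℝ) ^ (α + β))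
  refine (hnear.add hfar).mono' (by fun_prop) (ae_of_all _ fun x => ?_)
  rw [Real.norm_of_nonneg (by positivity), Pi.add_apply]
  by_cases hx : ‖x‖ < 1
  · rw [indicator_of_mem (mem_ball_zero_iff.2 hx), max_eq_left hx.le, Real.one_rpow, one_mul]
    exact le_add_of_nonneg_right (by positivity)
  · rw [not_lt] at hx
    have hd : (0 : ℝ) ≤ finrank ℝ E := Nat.cast_nonneg _
    rw [indicator_of_notMem (by simpa using hx), zero_add, max_eq_right hx,
      ← Real.rpow_add (by linarith), ← neg_add, ← div_rpow_neg (by positivity) (by norm_num)]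
    exact Real.rpow_le_rpow_of_nonpos (by positivity) (by linarith) (by linarith)

lemma integral_max_rpow_mul_one_add_norm_rpow_le_of_lt [Nontrivial E] {α β a : ℝ}
    (hβ₀ : 0 ≤ β) (hβ : β < finrank ℝ E) (hαβ : finrank ℝ E < α + β) (ha : 0 < a) :
    Integrable (fun z : E => (max a ‖z‖) ^ (-α) * (1 + ‖z‖) ^ (-β)) μ ∧
      ∫ z, (max a ‖z‖) ^ (-α) * (1 + ‖z‖) ^ (-β) ∂μ ≤
        (∫ x, (max 1 ‖x‖) ^ (-α) * ‖x‖ ^ (-β) ∂μ) * a ^ ((finrank ℝ E : ℝ) - (α + β)) := by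
  set ψ : E → ℝ := fun x => (max 1 ‖x‖) ^ (-α) * ‖x‖ ^ (-β)
  have hψ : Integrable ψ μ := integrable_max_one_norm_rpow_mul_norm_rpow μ hβ hαβ
  have hscale : ∀ z : E, (max a ‖z‖) ^ (-α) * ‖z‖ ^ (-β) = a ^ (-(α + β)) * ψ (a⁻¹ • z) := by
    intro z
    simp only [ψ, norm_smul, norm_inv, Real.norm_of_nonneg ha.le, inv_mul_eq_div]
    rw [← div_self ha.ne', max_div_div_right ha.le,
      div_rpow_neg (le_max_of_le_left ha.le) ha.le, div_rpow_neg (norm_nonneg z) ha.le,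
      neg_add, Real.rpow_add ha, Real.rpow_neg ha.le, Real.rpow_neg ha.le]
    field_simp
  have hmaj : Integrable (fun z => a ^ (-(α + β)) * ψ (a⁻¹ • z)) μ :=
    (hψ.comp_smul (inv_ne_zero ha.ne')).const_mul _
  have hdom : ∀ᵐ z ∂μ, (max a ‖z‖) ^ (-α) * (1 + ‖z‖) ^ (-β) ≤ a ^ (-(α + β)) * ψ (a⁻¹ • z) := by
    -- at `z = 0` the right side has the junk value `0 ^ (-β) = 0`
    filter_upwards [μ.ae_ne 0] with z hz
    rw [← hscale]
    refine mul_le_mul_of_nonneg_left ?_ (by positivity)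
    exact Real.rpow_le_rpow_of_nonpos (norm_pos_iff.2 hz) (by linarith) (by linarith)
  refine ⟨hmaj.mono' (by fun_prop) (hdom.mono fun z hz => ?_), ?_⟩
  · rwa [Real.norm_of_nonneg (by positivity)]
  calc ∫ z, (max a ‖z‖) ^ (-α) * (1 + ‖z‖) ^ (-β) ∂μ
      ≤ ∫ z, a ^ (-(α + β)) * ψ (a⁻¹ • z) ∂μ :=
        integral_mono_of_nonneg (ae_of_all _ fun z => by positivity) hmaj hdom
    _ = (∫ x, ψ x ∂μ) * a ^ ((finrank ℝ E : ℝ) - (α + β)) := by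
        rw [integral_const_mul, Measure.integral_comp_inv_smul_of_nonneg μ ψ ha.le, smul_eq_mul,
          ← Real.rpow_natCast, sub_eq_add_neg, Real.rpow_add ha]
        ring

lemma integral_max_rpow_mul_one_add_norm_rpow_le_of_gt {α β a : ℝ}
    (hα : 0 ≤ α) (hβ : finrank ℝ E < β) (ha : 0 < a) :
    Integrable (fun z : E => (max a ‖z‖) ^ (-α) * (1 + ‖z‖) ^ (-β)) μ ∧
      ∫ z, (max a ‖z‖) ^ (-α) * (1 + ‖z‖) ^ (-β) ∂μ ≤
        (∫ x, (1 + ‖x‖) ^ (-β) ∂μ) * a ^ (-α) := by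
  have hmaj := (integrable_one_add_norm (μ := μ) hβ).const_mul (a ^ (-α))
  have hdom : ∀ z : E, (max a ‖z‖) ^ (-α) * (1 + ‖z‖) ^ (-β) ≤ a ^ (-α) * (1 + ‖z‖) ^ (-β) :=
    fun z => mul_le_mul_of_nonneg_right
      (Real.rpow_le_rpow_of_nonpos ha (le_max_left _ _) (by linarith)) (by positivity)
  refine ⟨hmaj.mono' (by fun_prop) (ae_of_all _ fun z => ?_), ?_⟩
  · rw [Real.norm_of_nonneg (by positivity)]
    exact hdom z
  rw [mul_comm _ (a ^ (-α)), ← integral_const_mul]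
  exact integral_mono_of_nonneg (ae_of_all _ fun z => by positivity) hmaj (ae_of_all _ hdom)

lemma exists_integral_max_rpow_mul_one_add_norm_rpow_le [Nontrivial E] {α β : ℝ}
    (hα : 0 ≤ α) (hβ₀ : 0 ≤ β) (hαβ : finrank ℝ E < α + β) (hβ : β ≠ finrank ℝ E) :
    ∃ C : ℝ, ∀ a : ℝ, 1 ≤ a →
      Integrable (fun z : E => (max a ‖z‖) ^ (-α) * (1 + ‖z‖) ^ (-β)) μ ∧
        ∫ z, (max a ‖z‖) ^ (-α) * (1 + ‖z‖) ^ (-β) ∂μ ≤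
          C * a ^ (-min α (α + β - finrank ℝ E)) := by
  rcases hβ.lt_or_gt with hβ | hβ
  · refine ⟨∫ x, (max 1 ‖x‖) ^ (-α) * ‖x‖ ^ (-β) ∂μ, fun a ha => ?_⟩
    obtain ⟨hint, hle⟩ := integral_max_rpow_mul_one_add_norm_rpow_le_of_lt μ hβ₀ hβ hαβ
      (α := α) (by linarith)
    refine ⟨hint, hle.trans (mul_le_mul_of_nonneg_left ?_ (integral_nonneg fun x => by positivity))⟩
    exact Real.rpow_le_rpow_of_exponent_le ha (by linarith [min_le_right α (α + β - finrank ℝ E)])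
  · refine ⟨∫ x, (1 + ‖x‖) ^ (-β) ∂μ, fun a ha => ?_⟩
    obtain ⟨hint, hle⟩ := integral_max_rpow_mul_one_add_norm_rpow_le_of_gt μ hα hβ
      (by linarith : (0 : ℝ) < a)
    refine ⟨hint, hle.trans (mul_le_mul_of_nonneg_left ?_ (integral_nonneg fun x => by positivity))⟩
    exact Real.rpow_le_rpow_of_exponent_le ha (by linarith [min_le_left α (α + β - finrank ℝ E)])

theorem exists_integral_norm_sub_rpow_mul_one_add_norm_rpow_le {α β : ℝ} (hα₀ : 0 ≤ α)
    (hα : α < finrank ℝ E) (hαβ : finrank ℝ E < α + β) (hβ : β ≠ finrank ℝ E) :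
    ∃ C : ℝ, ∀ y : E, Integrable (fun z => ‖y - z‖ ^ (-α) * (1 + ‖z‖) ^ (-β)) μ ∧
      ∫ z, ‖y - z‖ ^ (-α) * (1 + ‖z‖) ^ (-β) ∂μ ≤
        C * (1 + ‖y‖) ^ (-min α (α + β - finrank ℝ E)) := by
  have : Nontrivial E := Module.nontrivial_of_finrank_pos (by exact_mod_cast hα₀.trans_lt hα)
  have hβ₀ : 0 ≤ β := by linarith
  set m := min α (α + β - finrank ℝ E)
  obtain ⟨C₁, hfar⟩ := exists_integral_max_rpow_mul_one_add_norm_rpow_le μ hα₀ hβ₀ hαβ hβ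
  set C₀ := ∫ x in ball (0 : E) 1, ‖x‖ ^ (-α) ∂μ
  have hC₀ : 0 ≤ C₀ := setIntegral_nonneg measurableSet_ball fun x _ => by positivity
  refine ⟨2 ^ (α + β - finrank ℝ E) * C₀ + 4 ^ α * C₁, fun y => ?_⟩
  set a := 1 + ‖y‖
  have ha : 1 ≤ a := le_add_of_nonneg_right (norm_nonneg y)
  obtain ⟨hfar_int, hfar_le⟩ := hfar a ha
  set near := (ball y (a / 2)).indicator fun z => ‖z - y‖ ^ (-α)
  have hnear_int : Integrable near μ := (integrable_indicator_iff measurableSet_ball).2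
    (integrableOn_ball_norm_sub_rpow_neg μ hα y _)
  have hnear_le : (a / 2) ^ (-β) * ∫ z, near z ∂μ ≤ 2 ^ (α + β - finrank ℝ E) * C₀ * a ^ (-m) := by
    rw [integral_indicator measurableSet_ball,
      setIntegral_ball_norm_sub_rpow_neg μ α y (by positivity), ← mul_assoc,
      ← Real.rpow_add (by positivity), show -β + (finrank ℝ E - α) = -(α + β - finrank ℝ E) by ring,
      div_rpow_neg (by positivity) (by norm_num), mul_right_comm]
    refine mul_le_mul_of_nonneg_left ?_ (by positivity)
    exact Real.rpow_le_rpow_of_exponent_le ha (by linarith [min_le_right α (α + β - finrank ℝ E)])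
  have hdom := norm_sub_rpow_mul_one_add_norm_rpow_le hα₀ hβ₀ y
  have hmaj := (hnear_int.const_mul ((a / 2) ^ (-β))).add (hfar_int.const_mul (4 ^ α))
  refine ⟨hmaj.mono' (by fun_prop) (ae_of_all _ fun z => ?_), ?_⟩
  · rw [Real.norm_of_nonneg (by positivity)]
    exact hdom z
  calc ∫ z, ‖y - z‖ ^ (-α) * (1 + ‖z‖) ^ (-β) ∂μ
      ≤ ∫ z, (a / 2) ^ (-β) * near z + 4 ^ α * ((max a ‖z‖) ^ (-α) * (1 + ‖z‖) ^ (-β)) ∂μ :=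
        integral_mono_of_nonneg (ae_of_all _ fun z => by positivity) hmaj (ae_of_all _ hdom)
    _ = (a / 2) ^ (-β) * ∫ z, near z ∂μ +
          4 ^ α * ∫ z, (max a ‖z‖) ^ (-α) * (1 + ‖z‖) ^ (-β) ∂μ := by
        rw [integral_add (hnear_int.const_mul _) (hfar_int.const_mul _), integral_const_mul,
          integral_const_mul]
    _ ≤ 2 ^ (α + β - finrank ℝ E) * C₀ * a ^ (-m) + 4 ^ α * (C₁ * a ^ (-m)) :=
        add_le_add hnear_le (mul_le_mul_of_nonneg_left hfar_le (by positivity))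
    _ = (2 ^ (α + β - finrank ℝ E) * C₀ + 4 ^ α * C₁) * a ^ (-m) := by ring

end

theorem statement18 (N : ℕ) (hN : 3 ≤ N) (σ : ℝ) (hσ : 0 < σ)
    (hσ' : σ ≠ (N : ℝ) - 2) :
    ∃ C : ℝ, 0 < C ∧ ∀ y : Euc N,
      Integrable (fun z : Euc N => ‖y - z‖ ^ (-((N : ℝ) - 2)) * (1 + ‖z‖) ^ (-(2 + σ))) volume ∧
      ∫ z : Euc N, ‖y - z‖ ^ (-((N : ℝ) - 2)) * (1 + ‖z‖) ^ (-(2 + σ))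
        ≤ C * (1 + ‖y‖) ^ (-(min σ ((N : ℝ) - 2))) := by
  have hN' : (3 : ℝ) ≤ N := by exact_mod_cast hN
  have hd : (finrank ℝ (Euc N) : ℝ) = N := by rw [finrank_euclideanSpace_fin]
  obtain ⟨C, hC⟩ := exists_integral_norm_sub_rpow_mul_one_add_norm_rpow_le
    (volume : Measure (Euc N)) (α := (N : ℝ) - 2) (β := 2 + σ) (by linarith)
    (by rw [hd]; linarith) (by rw [hd]; linarith) (by rw [hd]; contrapose! hσ'; linarith)
  have hm : min ((N : ℝ) - 2) ((N : ℝ) - 2 + (2 + σ) - finrank ℝ (Euc N)) =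
      min σ ((N : ℝ) - 2) := by
    rw [hd, min_comm]
    ring_nf
  refine ⟨max C 1, by positivity, fun y => ?_⟩
  obtain ⟨hint, hle⟩ := hC y
  rw [hm] at hle
  exact ⟨hint, hle.trans (mul_le_mul_of_nonneg_right (le_max_left _ _) (by positivity))⟩

end
end
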